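/- Uniqueness on symmetric data: if a hierarchical clustering method satisfies the Axioms of Value and Transformation, then on every symmetric network (A_X(x,x') = A_X(x',x) for all x, x') its output coincides with single linkage: u_X(x,x') = min over chains C(x,x') of max_i A_X(x_i, x_{i+1}). -/

import Mathlib

/-- Maximum dissimilarity over consecutive links of a chain (list of nodes). -/
def listCost {X : Type*} (A : X → X → ℝ) (l : List X) : ℝ :=
  (l.zip l.tail).foldr (fun p r => max (A p.1 p.2) r) 0

/-- Minimum over chains from `x` to `x'` of the maximum link cost. -/
noncomputable def minChainCost {X : Type*} (A : X → X → ℝ) (x x' : X) : ℝ :=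
  sInf {c : ℝ | ∃ l : List X, l.head? = some x ∧ l.getLast? = some x' ∧ listCost A l = c}

/-- Symmetrized dissimilarity Ā. -/
def symDis {X : Type*} (A : X → X → ℝ) (x x' : X) : ℝ := max (A x x') (A x' x)

/-- Reciprocal ultrametric. -/
noncomputable def uR {X : Type*} (A : X → X → ℝ) (x x' : X) : ℝ := minChainCost (symDis A) x x'

/-- Nonreciprocal ultrametric. -/
noncomputable def uNR {X : Type*} (A : X → X → ℝ) (x x' : X) : ℝ :=
  max (minChainCost A x x') (minChainCost A x' x)

/-- A (finite, asymmetric) network dissimilarity: nonnegative, vanishing exactly on the diagonal. -/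
def IsNetwork {X : Type*} (A : X → X → ℝ) : Prop :=
  (∀ x x', 0 ≤ A x x') ∧ (∀ x x', A x x' = 0 ↔ x = x')

/-- Ultrametric: nonnegative, symmetric, identity of indiscernibles, strong triangle inequality. -/
def IsUltra {X : Type*} (u : X → X → ℝ) : Prop :=
  (∀ x x', 0 ≤ u x x') ∧ (∀ x x', u x x' = u x' x) ∧
  (∀ x x', u x x' = 0 ↔ x = x') ∧
  (∀ x x' x'', u x x' ≤ max (u x x'') (u x'' x'))

/-!
A method satisfying the two axioms is squeezed between two comparisons with two-node networks.
From above: each pair `z ≠ z'` is the image of a two-node network whose output is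
`max (A z z') (A z' z)` by the Axiom of Value, so the Axiom of Transformation bounds the output
on every link; the strong triangle inequality then bounds it by the cost of any chain, that is by
the reciprocal ultrametric. From below: with `δ` the least chain cost from `x` to `x'`, collapsing
`X` onto the two nodes "closer to `x` than `δ`" and "the rest" is dissimilarity reducing for a
two-node network of value `δ`. On symmetric data the two bounds are single linkage.
-/

section Chains

variable {X : Type*} (A : X → X → ℝ)

@[simp]
lemma listCost_singleton (a : X) : listCost A [a] = 0 := rfl

lemma listCost_cons_cons (a b : X) (l : List X) :
    listCost A (a :: b :: l) = max (A a b) (listCost A (b :: l)) := rfl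

lemma listCost_nonneg : ∀ l : List X, 0 ≤ listCost A l
  | [] | [_] => le_rfl
  | _ :: b :: l => (listCost_nonneg (b :: l)).trans (le_max_right _ _)

lemma listCost_mem_insert_range :
    ∀ l : List X, listCost A l ∈ insert 0 (Set.range fun p : X × X => A p.1 p.2)
  | [] | [_] => Set.mem_insert _ _
  | a :: b :: l => by
    rw [listCost_cons_cons]
    rcases max_choice (A a b) (listCost A (b :: l)) with h | h <;> rw [h]
    · exact Set.mem_insert_of_mem _ ⟨(a, b), rfl⟩
    · exact listCost_mem_insert_range (b :: l)

lemma listCost_append_singleton :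
    ∀ (l : List X) {a : X} (b : X), l.getLast? = some a →
      listCost A (l ++ [b]) = max (listCost A l) (A a b)
  | [], _, _, h => by simp at h
  | [c], a, b, h => by
    obtain rfl : c = a := by simpa using h
    simp [listCost_cons_cons, max_comm]
  | c :: d :: l, a, b, h => by
    rw [List.getLast?_cons_cons] at h
    simp only [List.cons_append] at *
    rw [listCost_cons_cons, ← List.cons_append, listCost_append_singleton (d :: l) b h,
      listCost_cons_cons, max_assoc]

/-- Between distinct endpoints a chain has a link between distinct nodes. -/
lemma le_listCost_of_ne {ε : ℝ} (hε : ∀ a b, a ≠ b → ε ≤ A a b) :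
    ∀ (l : List X) {x x' : X}, l.head? = some x → l.getLast? = some x' → x ≠ x' →
      ε ≤ listCost A l
  | [], _, _, h, _, _ => by simp at h
  | [c], _, _, h, h', hne => by simp_all
  | a :: b :: l, x, x', h, h', hne => by
    obtain rfl : a = x := by simpa using h
    rw [listCost_cons_cons]
    by_cases hab : a = b
    · subst hab
      exact (le_listCost_of_ne hε (_ :: l) rfl h' hne).trans (le_max_right _ _)
    · exact (hε a b hab).trans (le_max_left _ _)

lemma le_listCost_of_le {u : X → X → ℝ} (hself : ∀ a, u a a = 0) (hle : ∀ a b, u a b ≤ A a b)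
    (htri : ∀ a b c, u a b ≤ max (u a c) (u c b)) :
    ∀ (l : List X) {x x' : X}, l.head? = some x → l.getLast? = some x' → u x x' ≤ listCost A l
  | [], _, _, h, _ => by simp at h
  | [c], x, x', h, h' => by
    obtain ⟨rfl, rfl⟩ : c = x ∧ c = x' := by simp_all
    simp [hself]
  | a :: b :: l, x, x', h, h' => by
    obtain rfl : a = x := by simpa using h
    rw [List.getLast?_cons_cons] at h'
    rw [listCost_cons_cons]
    exact (htri a x' b).trans (max_le_max (hle a b) (le_listCost_of_le hself hle htri _ rfl h'))

def chainCosts (x x' : X) : Set ℝ :=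
  {c : ℝ | ∃ l : List X, l.head? = some x ∧ l.getLast? = some x' ∧ listCost A l = c}

lemma chainCosts_nonempty (x x' : X) : (chainCosts A x x').Nonempty :=
  ⟨_, [x, x'], rfl, rfl, rfl⟩

lemma le_minChainCost_of_le {u : X → X → ℝ} (hself : ∀ a, u a a = 0) (hle : ∀ a b, u a b ≤ A a b)
    (htri : ∀ a b c, u a b ≤ max (u a c) (u c b)) (x x' : X) :
    u x x' ≤ minChainCost A x x' :=
  le_csInf (chainCosts_nonempty A x x') fun _ ⟨l, h, h', hc⟩ =>
    hc ▸ le_listCost_of_le A hself hle htri l h h'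

lemma le_minChainCost_of_ne {ε : ℝ} (hε : ∀ a b, a ≠ b → ε ≤ A a b) {x x' : X} (hne : x ≠ x') :
    ε ≤ minChainCost A x x' :=
  le_csInf (chainCosts_nonempty A x x') fun _ ⟨l, h, h', hc⟩ =>
    hc ▸ le_listCost_of_ne A hε l h h' hne

variable [Finite X]

lemma chainCosts_finite (x x' : X) : (chainCosts A x x').Finite :=
  ((Set.finite_range _).insert 0).subset fun _ ⟨l, _, _, hc⟩ => hc ▸ listCost_mem_insert_range A l

lemma exists_listCost_eq_minChainCost (x x' : X) :
    ∃ l : List X, l.head? = some x ∧ l.getLast? = some x' ∧ listCost A l = minChainCost A x x' :=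
  (chainCosts_nonempty A x x').csInf_mem (chainCosts_finite A x x')

lemma minChainCost_le_listCost {l : List X} {x x' : X} (h : l.head? = some x)
    (h' : l.getLast? = some x') : minChainCost A x x' ≤ listCost A l :=
  csInf_le (chainCosts_finite A x x').bddBelow ⟨l, h, h', rfl⟩

lemma minChainCost_self (x : X) : minChainCost A x x = 0 := by
  refine le_antisymm (minChainCost_le_listCost A (l := [x]) rfl rfl) ?_
  obtain ⟨l, -, -, hl⟩ := exists_listCost_eq_minChainCost A x x
  exact hl ▸ listCost_nonneg A l

lemma minChainCost_le_max (x z z' : X) :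
    minChainCost A x z' ≤ max (minChainCost A x z) (A z z') := by
  obtain ⟨l, h, h', hl⟩ := exists_listCost_eq_minChainCost A x z
  obtain ⟨a, t, rfl⟩ := List.exists_cons_of_ne_nil (l := l) (by rintro rfl; simp at h)
  rw [← hl, ← listCost_append_singleton A _ z' h']
  exact minChainCost_le_listCost A (by simpa using h) List.getLast?_concat

end Chains

section Network

def twoPoint (a b : ℝ) : Bool → Bool → ℝ
  | false, true => a
  | true, false => b
  | _, _ => 0

lemma isNetwork_twoPoint {a b : ℝ} (ha : 0 < a) (hb : 0 < b) : IsNetwork (twoPoint a b) := by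
  refine ⟨?_, ?_⟩ <;> rintro (_ | _) (_ | _) <;> simp [twoPoint, ha.le, hb.le, ha.ne', hb.ne']

variable {X : Type*} {A : X → X → ℝ}

lemma IsNetwork.self (hA : IsNetwork A) (x : X) : A x x = 0 := (hA.2 x x).2 rfl

lemma IsNetwork.pos (hA : IsNetwork A) {x x' : X} (hne : x ≠ x') : 0 < A x x' :=
  (hA.1 x x').lt_of_ne fun h => hne ((hA.2 x x').1 h.symm)

lemma IsNetwork.exists_pos_le [Finite X] (hA : IsNetwork A) :
    ∃ ε > 0, ∀ x x', x ≠ x' → ε ≤ A x x' := by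
  rcases isEmpty_or_nonempty {p : X × X // p.1 ≠ p.2} with h | h
  · exact ⟨1, one_pos, fun x x' hne => (h.false ⟨(x, x'), hne⟩).elim⟩
  · obtain ⟨p, hp⟩ := Finite.exists_min fun p : {p : X × X // p.1 ≠ p.2} => A p.1.1 p.1.2
    exact ⟨_, hA.pos p.2, fun x x' hne => hp ⟨(x, x'), hne⟩⟩

/-- `true` marks the nodes at chain cost at least `δ` from `x`; entering them costs at least `δ`. -/
lemma twoPoint_cut_le [Finite X] (hA : IsNetwork A) {ε : ℝ} (hε : ∀ z z', z ≠ z' → ε ≤ A z z')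
    (x : X) (δ : ℝ) (z z' : X) :
    twoPoint δ ε (decide (δ ≤ minChainCost A x z)) (decide (δ ≤ minChainCost A x z')) ≤ A z z' := by
  by_cases hz : δ ≤ minChainCost A x z <;> by_cases hz' : δ ≤ minChainCost A x z' <;>
    simp only [hz, hz', decide_true, decide_false, twoPoint]
  · exact hA.1 z z'
  · exact hε z z' fun h => hz' (h ▸ hz)
  · exact (le_max_iff.1 (hz'.trans (minChainCost_le_max A x z z'))).resolve_left hz
  · exact hA.1 z z'

end Network

abbrev ClusteringMethod : Type 1 := ∀ (X : Type) [Fintype X], (X → X → ℝ) → (X → X → ℝ)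

def AxiomOfValue (H : ClusteringMethod) : Prop :=
  ∀ (X : Type) [Fintype X] (A : X → X → ℝ), IsNetwork A →
    ∀ p q : X, p ≠ q → (∀ x : X, x = p ∨ x = q) → H X A p q = max (A p q) (A q p)

def AxiomOfTransformation (H : ClusteringMethod) : Prop :=
  ∀ (X Y : Type) [Fintype X] [Fintype Y] (A_X : X → X → ℝ) (A_Y : Y → Y → ℝ),
    IsNetwork A_X → IsNetwork A_Y → ∀ φ : X → Y, (∀ x x' : X, A_Y (φ x) (φ x') ≤ A_X x x') →
      ∀ x x' : X, H Y A_Y (φ x) (φ x') ≤ H X A_X x x'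

section Method

variable {H : ClusteringMethod}

lemma AxiomOfValue.twoPoint_eq (hV : AxiomOfValue H) {a b : ℝ} (ha : 0 < a) (hb : 0 < b) :
    H Bool (twoPoint a b) false true = max a b :=
  hV Bool _ (isNetwork_twoPoint ha hb) false true Bool.false_ne_true fun b => by cases b <;> simp

variable (hV : AxiomOfValue H) (hT : AxiomOfTransformation H)
  {X : Type} [Fintype X] {A : X → X → ℝ} (hU : IsUltra (H X A)) (hA : IsNetwork A)
include hV hT hU hA

lemma method_le_symDis (z z' : X) : H X A z z' ≤ symDis A z z' := by
  rcases eq_or_ne z z' with rfl | hne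
  · rw [(hU.2.2.1 z z).2 rfl]
    exact le_max_of_le_left (hA.1 z z)
  have hB := isNetwork_twoPoint (hA.pos hne) (hA.pos hne.symm)
  have h := hT Bool X _ A hB hA (fun b => cond b z' z)
    (by rintro (_ | _) (_ | _) <;> simp [twoPoint, hA.self]) false true
  rwa [hV.twoPoint_eq (hA.pos hne) (hA.pos hne.symm)] at h

lemma method_le_uR (x x' : X) : H X A x x' ≤ uR A x x' :=
  le_minChainCost_of_le _ (fun a => (hU.2.2.1 a a).2 rfl) (method_le_symDis hV hT hU hA) hU.2.2.2
    x x'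

lemma minChainCost_le_method (x x' : X) : minChainCost A x x' ≤ H X A x x' := by
  rcases eq_or_ne x x' with rfl | hne
  · rw [minChainCost_self]
    exact hU.1 x x
  obtain ⟨ε, hε, hεA⟩ := hA.exists_pos_le
  set δ := minChainCost A x x'
  have hεδ : ε ≤ δ := le_minChainCost_of_ne A hεA hne
  have h := hT X Bool A (twoPoint δ ε) hA (isNetwork_twoPoint (hε.trans_le hεδ) hε) _
    (twoPoint_cut_le hA hεA x δ) x x'
  have hx : decide (δ ≤ minChainCost A x x) = false := by
    simpa [minChainCost_self] using hε.trans_le hεδ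
  rwa [hx, decide_eq_true le_rfl, hV.twoPoint_eq (hε.trans_le hεδ) hε, max_eq_left hεδ] at h

end Method

theorem uniqueness_on_symmetric_data
    (H : ∀ (X : Type) [Fintype X], (X → X → ℝ) → (X → X → ℝ))
    (hUltra : ∀ (X : Type) [Fintype X] (A : X → X → ℝ), IsNetwork A → IsUltra (H X A))
    (hValue : ∀ (X : Type) [Fintype X] (A : X → X → ℝ), IsNetwork A →
      ∀ p q : X, p ≠ q → (∀ x : X, x = p ∨ x = q) →
        H X A p q = max (A p q) (A q p))
    (hTransf : ∀ (X Y : Type) [Fintype X] [Fintype Y]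
        (A_X : X → X → ℝ) (A_Y : Y → Y → ℝ), IsNetwork A_X → IsNetwork A_Y →
      ∀ φ : X → Y, (∀ x x' : X, A_Y (φ x) (φ x') ≤ A_X x x') →
        ∀ x x' : X, H Y A_Y (φ x) (φ x') ≤ H X A_X x x') :
    ∀ (X : Type) [Fintype X] (A : X → X → ℝ), IsNetwork A →
      (∀ x x' : X, A x x' = A x' x) →
      ∀ x x' : X, H X A x x' = minChainCost A x x' := by
  intro X _ A hA hsym x x'
  have hsymDis : symDis A = A := funext₂ fun z z' => by simp [symDis, hsym z' z]
  have hU := hUltra X A hA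
  refine le_antisymm ?_ (minChainCost_le_method hValue hTransf hU hA x x')
  simpa [uR, hsymDis] using method_le_uR hValue hTransf hU hA x x'
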